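/- arXiv:2210.17373 — 4 statements merged into one kernel-verified Lean document; each statement's English description precedes it below -/
import Mathlib

section
/- Let (N,w) be a superadditive TU game on a finite nonempty player set N that has a PMAS [x^S_i]. If S1 and S2 are disjoint nonempty coalitions with w(S1 ∪ S2) ≤ w(S1) + w(S2), then the suballocation for S1 ∪ S2 is the concatenation of the suballocations for S1 and S2: x^{S1∪S2}_i = x^{S1}_i for every i ∈ S1 and x^{S1∪S2}_j = x^{S2}_j for every j ∈ S2. -/
open Finset

/-- A population monotonic allocation scheme (PMAS) for the TU game `w` on the
finite player set `α`: subgame efficiency on every nonempty coalition, and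
individual payoff monotonicity along coalition inclusion. -/
def IsPMAS {α : Type*} [Fintype α] (w : Finset α → ℝ) (x : Finset α → α → ℝ) : Prop :=
  (∀ S : Finset α, S.Nonempty → ∑ i ∈ S, x S i = w S) ∧
  (∀ S T : Finset α, S ⊆ T → ∀ i ∈ S, x S i ≤ x T i)

/-- `μ` is a matching inside coalition `S`: every pair uses players of `S`,
and each player appears in at most one pair. -/
def IsMatching {I J : Type*} (S : Finset (I ⊕ J)) (μ : Finset (I × J)) : Prop :=
  (∀ p ∈ μ, Sum.inl p.1 ∈ S ∧ Sum.inr p.2 ∈ S) ∧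
  (∀ p ∈ μ, ∀ q ∈ μ, p.1 = q.1 → p = q) ∧
  (∀ p ∈ μ, ∀ q ∈ μ, p.2 = q.2 → p = q)

/-- The assignment game induced by the matrix `A`. -/
noncomputable def assignGame {I J : Type*} [Fintype I] [Fintype J]
    (A : I → J → ℝ) (S : Finset (I ⊕ J)) : ℝ :=
  sSup ((fun μ : Finset (I × J) => ∑ p ∈ μ, A p.1 p.2) '' {μ | IsMatching S μ})

/-- `x` is a core allocation of the game `w`. -/
def InCore {α : Type*} [Fintype α] (w : Finset α → ℝ) (x : α → ℝ) : Prop :=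
  (∑ i, x i) = w Finset.univ ∧ ∀ S : Finset α, w S ≤ ∑ i ∈ S, x i

/-- `x` is PMAS-extendable in the game `w`. -/
def PMASExtendable {α : Type*} [Fintype α] (w : Finset α → ℝ) (x : α → ℝ) : Prop :=
  ∃ y, IsPMAS w y ∧ ∀ i, y Finset.univ i = x i

/-- The upper (utopia) vector. -/
noncomputable def upperVec {α : Type*} [Fintype α] [DecidableEq α]
    (v : Finset α → ℝ) (i : α) : ℝ :=
  v Finset.univ - v (Finset.univ.erase i)

/-- The lower (minimal right) vector. -/
noncomputable def lowerVec {α : Type*} [Fintype α] [DecidableEq α]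
    (v : Finset α → ℝ) (i : α) : ℝ :=
  sSup {t | ∃ S : Finset α, i ∈ S ∧ t = v S - ∑ j ∈ S.erase i, upperVec v j}

/-- `τ` is a tau-value of the game `v`. -/
def IsTauValue {α : Type*} [Fintype α] [DecidableEq α] (v : Finset α → ℝ) (τ : α → ℝ) : Prop :=
  ∃ κ : ℝ, 0 ≤ κ ∧ κ ≤ 1 ∧ (∀ i, τ i = κ * upperVec v i + (1 - κ) * lowerVec v i) ∧
    ∑ i, τ i = v Finset.univ

open scoped Classical in
/-- The nondecreasingly ordered list of satisfactions of the nonempty proper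
coalitions at allocation `x`. -/
noncomputable def satList {α : Type*} [Fintype α] (v : Finset α → ℝ) (x : α → ℝ) : List ℝ :=
  ((Finset.univ.filter (fun S : Finset α => S.Nonempty ∧ S ≠ Finset.univ)).val.map
    (fun S => ∑ i ∈ S, x i - v S)).sort (· ≤ ·)

/-- `x` is the nucleolus of `v`: a core allocation lexicographically maximizing
the nondecreasingly ordered satisfaction vector over the core. -/
noncomputable def IsNucleolus {α : Type*} [Fintype α] (v : Finset α → ℝ) (x : α → ℝ) : Prop :=
  InCore v x ∧ ∀ y, InCore v y →
    satList v y = satList v x ∨ List.Lex (· < ·) (satList v y) (satList v x)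

/-- `A` has Γ-shaped support with corner `(i1, j1)`. -/
def GammaShaped {I J : Type*} (A : I → J → ℝ) (i1 : I) (j1 : J) : Prop :=
  (∀ k l, (k = i1 ∨ l = j1) → 0 < A k l) ∧ (∀ k l, k ≠ i1 → l ≠ j1 → A k l = 0)

/-- The corner `(i1, j1)` of `A` is dominant. -/
def DominantCorner {I J : Type*} (A : I → J → ℝ) (i1 : I) (j1 : J) : Prop :=
  ∀ k l, k ≠ i1 → l ≠ j1 → A i1 l + A k j1 ≤ A i1 j1

/-- In a superadditive game with a PMAS, if `S1` and `S2` are disjoint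
nonempty coalitions with `w (S1 ∪ S2) ≤ w S1 + w S2`, then the suballocation for
`S1 ∪ S2` is the concatenation of the suballocations for `S1` and `S2`. -/
theorem pmas_inessential_union {α : Type*} [Fintype α] [Nonempty α] [DecidableEq α]
    (w : Finset α → ℝ) (hzero : w ∅ = 0)
    (hsuper : ∀ S T : Finset α, Disjoint S T → w S + w T ≤ w (S ∪ T))
    (x : Finset α → α → ℝ) (hx : IsPMAS w x)
    (S1 S2 : Finset α) (h1 : S1.Nonempty) (h2 : S2.Nonempty) (hd : Disjoint S1 S2)
    (hle : w (S1 ∪ S2) ≤ w S1 + w S2) :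
    (∀ i ∈ S1, x (S1 ∪ S2) i = x S1 i) ∧ (∀ j ∈ S2, x (S1 ∪ S2) j = x S2 j) := by
  obtain ⟨heff, hmono⟩ := hx
  have hT : S1 ∪ S2 = S1 ∪ S2 := rfl
  have hsumT : ∑ i ∈ S1 ∪ S2, x (S1 ∪ S2) i = w (S1 ∪ S2) :=
    heff _ (h1.mono Finset.subset_union_left)
  have hsplit : ∑ i ∈ S1, x (S1 ∪ S2) i + ∑ i ∈ S2, x (S1 ∪ S2) i = w (S1 ∪ S2) := by
    rw [← Finset.sum_union hd]; exact hsumT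
  have h1le : ∑ i ∈ S1, x S1 i ≤ ∑ i ∈ S1, x (S1 ∪ S2) i :=
    Finset.sum_le_sum (fun i hi => hmono S1 _ Finset.subset_union_left i hi)
  have h2le : ∑ i ∈ S2, x S2 i ≤ ∑ i ∈ S2, x (S1 ∪ S2) i :=
    Finset.sum_le_sum (fun i hi => hmono S2 _ Finset.subset_union_right i hi)
  have hw : w (S1 ∪ S2) = w S1 + w S2 :=
    le_antisymm hle (hsuper S1 S2 hd)
  have e1 : ∑ i ∈ S1, x S1 i = w S1 := heff S1 h1
  have e2 : ∑ i ∈ S2, x S2 i = w S2 := heff S2 h2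
  have hs1 : ∑ i ∈ S1, x (S1 ∪ S2) i = ∑ i ∈ S1, x S1 i := by
    rw [e1]; linarith
  have hs2 : ∑ i ∈ S2, x (S1 ∪ S2) i = ∑ i ∈ S2, x S2 i := by
    rw [e2]; linarith
  constructor
  · intro i hi
    exact ((Finset.sum_eq_sum_iff_of_le (fun i hi => hmono S1 _ Finset.subset_union_left i hi)).mp hs1.symm i hi).symm
  · intro j hj
    exact ((Finset.sum_eq_sum_iff_of_le (fun j hj => hmono S2 _ Finset.subset_union_right j hj)).mp hs2.symm j hj).symm
end

section
/- Let (I ∪ J, w_A) be an assignment game in which there is exactly one row player, i.e. |I| = 1 (J finite nonempty, A a nonnegative row vector). Then every core allocation of (I ∪ J, w_A) is PMAS-extendable. -/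
open Finset

section AuxAssign

variable {I J : Type*} [Fintype I] [Fintype J] (A : I → J → ℝ)

lemma isMatching_empty_aux (S : Finset (I ⊕ J)) : IsMatching S (∅ : Finset (I × J)) := by
  refine ⟨?_, ?_, ?_⟩ <;> intro p hp <;> simp at hp

lemma assignGame_set_nonempty_aux (S : Finset (I ⊕ J)) :
    ((fun μ : Finset (I × J) => ∑ p ∈ μ, A p.1 p.2) '' {μ | IsMatching S μ}).Nonempty :=
  ⟨0, ∅, isMatching_empty_aux S, by simp⟩

lemma assignGame_bdd_aux (S : Finset (I ⊕ J)) :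
    BddAbove ((fun μ : Finset (I × J) => ∑ p ∈ μ, A p.1 p.2) '' {μ | IsMatching S μ}) :=
  (Set.toFinite _).image _ |>.bddAbove

lemma le_assignGame_aux {S : Finset (I ⊕ J)} {μ : Finset (I × J)} (h : IsMatching S μ) :
    ∑ p ∈ μ, A p.1 p.2 ≤ assignGame A S :=
  le_csSup (assignGame_bdd_aux A S) ⟨μ, h, rfl⟩

lemma assignGame_le_aux {S : Finset (I ⊕ J)} {B : ℝ}
    (h : ∀ μ : Finset (I × J), IsMatching S μ → ∑ p ∈ μ, A p.1 p.2 ≤ B) :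
    assignGame A S ≤ B :=
  csSup_le (assignGame_set_nonempty_aux A S) (by rintro v ⟨μ, hμ, rfl⟩; exact h μ hμ)

lemma assignGame_nonneg_aux (S : Finset (I ⊕ J)) : 0 ≤ assignGame A S := by
  have := le_assignGame_aux A (isMatching_empty_aux (I := I) (J := J) S)
  simpa using this

lemma assignGame_mono_aux {S T : Finset (I ⊕ J)} (h : S ⊆ T) :
    assignGame A S ≤ assignGame A T := by
  refine assignGame_le_aux A fun μ hμ => le_assignGame_aux A ?_
  exact ⟨fun p hp => ⟨h (hμ.1 p hp).1, h (hμ.1 p hp).2⟩, hμ.2.1, hμ.2.2⟩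

lemma assignGame_norow_aux {S : Finset (I ⊕ J)} (h : ∀ i : I, Sum.inl i ∉ S) :
    assignGame A S = 0 := by
  refine le_antisymm (assignGame_le_aux A fun μ hμ => ?_) (assignGame_nonneg_aux A S)
  have hμe : μ = ∅ := Finset.eq_empty_of_forall_notMem fun p hp => h p.1 (hμ.1 p hp).1
  simp [hμe]

lemma assignGame_singleton_aux (q : I ⊕ J) : assignGame A ({q} : Finset (I ⊕ J)) = 0 := by
  refine le_antisymm (assignGame_le_aux A fun μ hμ => ?_) (assignGame_nonneg_aux A _)
  have hμe : μ = ∅ := by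
    refine Finset.eq_empty_of_forall_notMem fun p hp => ?_
    have h1 := (hμ.1 p hp).1
    have h2 := (hμ.1 p hp).2
    simp only [Finset.mem_singleton] at h1 h2
    rw [← h1] at h2
    exact Sum.inl_ne_inr h2.symm
  simp [hμe]

lemma pair_le_assignGame_aux {S : Finset (I ⊕ J)} {i0 : I} {j : J}
    (h1 : Sum.inl i0 ∈ S) (h2 : Sum.inr j ∈ S) : A i0 j ≤ assignGame A S := by
  have hm : IsMatching S ({(i0, j)} : Finset (I × J)) := by
    refine ⟨?_, ?_, ?_⟩
    · intro p hp
      simp only [Finset.mem_singleton] at hp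
      subst hp; exact ⟨h1, h2⟩
    · intro p hp q hq _
      simp only [Finset.mem_singleton] at hp hq
      rw [hp, hq]
    · intro p hp q hq _
      simp only [Finset.mem_singleton] at hp hq
      rw [hp, hq]
  simpa using le_assignGame_aux A hm

lemma singlerow_assignGame_le_aux {i0 : I} (hi0 : ∀ i : I, i = i0)
    {S : Finset (I ⊕ J)} {B : ℝ} (hB0 : 0 ≤ B)
    (hB : ∀ j : J, Sum.inr j ∈ S → A i0 j ≤ B) : assignGame A S ≤ B := by
  refine assignGame_le_aux A fun μ hμ => ?_
  rcases μ.eq_empty_or_nonempty with rfl | ⟨p, hp⟩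
  · simpa using hB0
  · have hsingle : μ = {p} := by
      refine Finset.eq_singleton_iff_unique_mem.mpr ⟨hp, fun q hq => ?_⟩
      exact hμ.2.1 q hq p hp (by rw [hi0 q.1, hi0 p.1])
    rw [hsingle, Finset.sum_singleton]
    have hmem := (hμ.1 p hp).2
    have h1 : p.1 = i0 := hi0 _
    rw [h1]
    exact hB p.2 hmem

end AuxAssign

/-- In an assignment game with exactly one row player, every core
allocation is PMAS-extendable. -/
theorem assignGame_one_row_core_pmas_extendable {I J : Type*} [Fintype I] [Fintype J]
    [Nonempty J] (hI : Fintype.card I = 1)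
    (A : I → J → ℝ) (hA : ∀ i j, 0 ≤ A i j)
    (x : I ⊕ J → ℝ) (hx : InCore (assignGame A) x) :
    PMASExtendable (assignGame A) x := by
  classical
  obtain ⟨i0, hi0⟩ := Fintype.card_eq_one_iff.mp hI
  obtain ⟨j0, -, hj0⟩ := Finset.exists_max_image (Finset.univ : Finset J) (A i0)
    Finset.univ_nonempty
  set M : ℝ := A i0 j0 with hM
  set p : ℝ := x (Sum.inr j0) with hp
  -- nonnegativity of core payoffs
  have hxnn : ∀ q, 0 ≤ x q := by
    intro q
    have h := hx.2 {q}
    rwa [assignGame_singleton_aux, Finset.sum_singleton] at h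
  -- value of the grand coalition
  have hwN : assignGame A Finset.univ = M := by
    refine le_antisymm ?_ (pair_le_assignGame_aux A (Finset.mem_univ _) (Finset.mem_univ _))
    exact singlerow_assignGame_le_aux A hi0 (hA i0 j0) fun j _ => hj0 j (Finset.mem_univ j)
  -- efficiency, split over the sum type
  have hIuniv : (Finset.univ : Finset I) = {i0} := by
    ext i; simp [hi0 i]
  have heff : x (Sum.inl i0) + ∑ j : J, x (Sum.inr j) = M := by
    have h := hx.1
    rw [Fintype.sum_sum_type, hIuniv, Finset.sum_singleton, hwN] at h
    exact h
  -- pairwise core constraints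
  have hpair : ∀ j : J, A i0 j ≤ x (Sum.inl i0) + x (Sum.inr j) := by
    intro j
    have h := hx.2 {Sum.inl i0, Sum.inr j}
    have hne : (Sum.inl i0 : I ⊕ J) ≠ Sum.inr j := Sum.inl_ne_inr
    rw [Finset.sum_pair hne] at h
    refine le_trans ?_ h
    exact pair_le_assignGame_aux A (by simp) (by simp)
  -- all columns except j0 get zero
  have hsplit : ∑ j : J, x (Sum.inr j) = p + ∑ j ∈ Finset.univ.erase j0, x (Sum.inr j) :=
    (Finset.add_sum_erase _ _ (Finset.mem_univ j0)).symm
  have hothersum : ∑ j ∈ Finset.univ.erase j0, x (Sum.inr j) = 0 := by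
    have h1 : x (Sum.inl i0) + p + ∑ j ∈ Finset.univ.erase j0, x (Sum.inr j) = M := by
      rw [add_assoc, ← hsplit]; exact heff
    have h2 := hpair j0
    have h3 : ∑ j ∈ Finset.univ.erase j0, x (Sum.inr j) ≤ 0 := by
      rw [← hp] at h2; rw [← hM] at h2; linarith
    have h4 : 0 ≤ ∑ j ∈ Finset.univ.erase j0, x (Sum.inr j) :=
      Finset.sum_nonneg fun j _ => hxnn _
    linarith
  have hothers : ∀ j : J, j ≠ j0 → x (Sum.inr j) = 0 := by
    intro j hj
    have := (Finset.sum_eq_zero_iff_of_nonneg fun k _ => hxnn (Sum.inr k)).mp hothersum j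
      (Finset.mem_erase.mpr ⟨hj, Finset.mem_univ j⟩)
    exact this
  have hxi0 : x (Sum.inl i0) = M - p := by
    have := heff
    rw [hsplit, hothersum] at this
    linarith
  have hple : p ≤ M := by
    have := hxnn (Sum.inl i0)
    rw [hxi0] at this; linarith
  have hAle : ∀ j : J, j ≠ j0 → A i0 j ≤ M - p := by
    intro j hj
    have := hpair j
    rw [hothers j hj, hxi0] at this
    linarith
  -- the PMAS
  refine ⟨fun S q =>
    if Sum.inl i0 ∈ S then
      (if q = Sum.inl i0 then assignGame A S - (if Sum.inr j0 ∈ S then p else 0) else x q)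
    else 0, ⟨?_, ?_⟩, ?_⟩
  · -- efficiency on every nonempty coalition
    intro S hS
    by_cases hrow : Sum.inl i0 ∈ S
    · have hsum : ∑ q ∈ S, (fun q =>
          if Sum.inl i0 ∈ S then
            (if q = Sum.inl i0 then assignGame A S - (if Sum.inr j0 ∈ S then p else 0) else x q)
          else 0) q
          = (assignGame A S - (if Sum.inr j0 ∈ S then p else 0))
            + ∑ q ∈ S.erase (Sum.inl i0), x q := by
        rw [← Finset.add_sum_erase S _ hrow]
        simp only [if_pos hrow, if_pos rfl]
        congr 1
        refine Finset.sum_congr rfl fun q hq => ?_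
        have hq' : q ≠ Sum.inl i0 := (Finset.mem_erase.mp hq).1
        simp [hq']
      rw [hsum]
      have herase : ∑ q ∈ S.erase (Sum.inl i0), x q = (if Sum.inr j0 ∈ S then p else 0) := by
        by_cases hj0S : Sum.inr j0 ∈ S
        · rw [if_pos hj0S]
          refine Finset.sum_eq_single_of_mem (Sum.inr j0)
            (Finset.mem_erase.mpr ⟨Sum.inr_ne_inl, hj0S⟩) ?_ |>.trans rfl
          · intro q hq hqne
            rcases q with i | j
            · exact absurd (by rw [hi0 i]) (Finset.mem_erase.mp hq).1
            · exact hothers j (by simpa using hqne)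
        · rw [if_neg hj0S]
          refine Finset.sum_eq_zero fun q hq => ?_
          rcases q with i | j
          · exact absurd (by rw [hi0 i]) (Finset.mem_erase.mp hq).1
          · refine hothers j fun h => hj0S ?_
            rw [← h]; exact (Finset.mem_erase.mp hq).2
      rw [herase]; ring
    · have hnorow : ∀ i : I, Sum.inl i ∉ S := by
        intro i hi; rw [hi0 i] at hi; exact hrow hi
      rw [assignGame_norow_aux A hnorow]
      refine Finset.sum_eq_zero fun q _ => ?_
      simp [hrow]
  · -- monotonicity
    intro S T hST q hq
    by_cases hT : Sum.inl i0 ∈ T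
    · by_cases hS : Sum.inl i0 ∈ S
      · by_cases hq0 : q = Sum.inl i0
        · simp only [if_pos hS, if_pos hT, if_pos hq0]
          by_cases hj0S : Sum.inr j0 ∈ S
          · rw [if_pos hj0S, if_pos (hST hj0S)]
            exact sub_le_sub_right (assignGame_mono_aux A hST) p
          · by_cases hj0T : Sum.inr j0 ∈ T
            · rw [if_neg hj0S, if_pos hj0T, sub_zero]
              have h1 : assignGame A S ≤ M - p := by
                refine singlerow_assignGame_le_aux A hi0 (by linarith) fun j hj => ?_
                refine hAle j fun h => hj0S ?_
                rw [← h]; exact hj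
              have h2 : M ≤ assignGame A T := pair_le_assignGame_aux A hT hj0T
              linarith
            · rw [if_neg hj0S, if_neg hj0T, sub_zero, sub_zero]
              exact assignGame_mono_aux A hST
        · simp [hS, hT, hq0]
      · have hq0 : q ≠ Sum.inl i0 := fun h => hS (h ▸ hq)
        simp only [if_neg hS, if_pos hT, if_neg hq0]
        exact hxnn q
    · have hSr : Sum.inl i0 ∉ S := fun h => hT (hST h)
      simp [hSr, hT]
  · -- the top coalition gets x
    intro q
    by_cases hq0 : q = Sum.inl i0
    · subst hq0
      simp [hwN, hxi0]
    · simp [hq0]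
end

section
/- Let (I ∪ J, w) be the assignment game with row players I = {1,2} and column players J = {3,4} induced by the 2×2 matrix with entries a_{13} = a, a_{14} = b, a_{23} = c, a_{24} = 0, where a, b, c > 0. If a ≥ b + c, then every core allocation of (I ∪ J, w) is PMAS-extendable. -/
open Finset

section AuxAssign2x2

instance instDecIsMatching {I J : Type*} [DecidableEq I] [DecidableEq J]
    (S : Finset (I ⊕ J)) (μ : Finset (I × J)) :
    Decidable (IsMatching S μ) := by unfold IsMatching; infer_instance

lemma isMatching_empty' {I J : Type*} (S : Finset (I ⊕ J)) :
    IsMatching S (∅ : Finset (I × J)) := by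
  refine ⟨fun p hp => absurd hp (Finset.notMem_empty p), ?_, ?_⟩ <;>
    exact fun p hp => absurd hp (Finset.notMem_empty p)

lemma isMatching_mono' {I J : Type*} {S T : Finset (I ⊕ J)} (h : S ⊆ T) {μ : Finset (I × J)}
    (hμ : IsMatching S μ) : IsMatching T μ :=
  ⟨fun p hp => ⟨h (hμ.1 p hp).1, h (hμ.1 p hp).2⟩, hμ.2.1, hμ.2.2⟩

lemma assignGame_eq' {I J : Type*} [Fintype I] [Fintype J] (A : I → J → ℝ)
    (S : Finset (I ⊕ J)) (v : ℝ)
    (h1 : ∃ μ, IsMatching S μ ∧ ∑ p ∈ μ, A p.1 p.2 = v)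
    (h2 : ∀ μ, IsMatching S μ → ∑ p ∈ μ, A p.1 p.2 ≤ v) :
    assignGame A S = v := by
  obtain ⟨μ0, hμ0, hv0⟩ := h1
  apply le_antisymm
  · refine csSup_le ⟨v, μ0, hμ0, hv0⟩ ?_
    rintro t ⟨μ, hμ, rfl⟩
    exact h2 μ hμ
  · exact le_csSup ⟨v, by rintro t ⟨μ, hμ, rfl⟩; exact h2 μ hμ⟩ ⟨μ0, hμ0, hv0⟩

lemma w_eval' (a b c : ℝ) (hb : 0 < b) (hc : 0 < c) (hdom : b + c ≤ a)
    (S : Finset (Fin 2 ⊕ Fin 2)) :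
    assignGame ![![a, b], ![c, 0]] S =
      if Sum.inl 0 ∈ S ∧ Sum.inr 0 ∈ S then a
      else if Sum.inl 0 ∈ S ∧ Sum.inr 1 ∈ S then b
      else if Sum.inl 1 ∈ S ∧ Sum.inr 0 ∈ S then c
      else 0 := by
  set A : Fin 2 → Fin 2 → ℝ := ![![a, b], ![c, 0]] with hA
  have hA00 : A 0 0 = a := rfl
  have hA01 : A 0 1 = b := rfl
  have hA10 : A 1 0 = c := rfl
  have hA11 : A 1 1 = 0 := rfl
  split_ifs with h1 h2 h3
  · apply assignGame_eq'
    · refine ⟨{(0,0)}, ⟨?_, ?_, ?_⟩, by simp [hA00]⟩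
      · intro p hp; simp at hp; subst hp; exact ⟨h1.1, h1.2⟩
      · intro p hp q hq _; simp at hp hq; rw [hp, hq]
      · intro p hp q hq _; simp at hp hq; rw [hp, hq]
    · intro μ hμ
      have hu : IsMatching (Finset.univ) μ := isMatching_mono' (Finset.subset_univ S) hμ
      have hlist0 : ∀ ν : Finset (Fin 2 × Fin 2),
          IsMatching (Finset.univ : Finset (Fin 2 ⊕ Fin 2)) ν →
          ν = ∅ ∨ ν = {(0,0)} ∨ ν = {(0,1)} ∨ ν = {(1,0)} ∨ ν = {(1,1)} ∨
          ν = {(0,0),(1,1)} ∨ ν = {(0,1),(1,0)} := by decide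
      have hlist := hlist0 μ hu
      rcases hlist with rfl|rfl|rfl|rfl|rfl|rfl|rfl <;>
        simp [hA00, hA01, hA10, hA11, Finset.sum_insert, Finset.sum_singleton] <;> linarith
  · apply assignGame_eq'
    · refine ⟨{(0,1)}, ⟨?_, ?_, ?_⟩, by simp [hA01]⟩
      · intro p hp; simp at hp; subst hp; exact ⟨h2.1, h2.2⟩
      · intro p hp q hq _; simp at hp hq; rw [hp, hq]
      · intro p hp q hq _; simp at hp hq; rw [hp, hq]
    · intro μ hμ
      have hsub : μ ⊆ {(0,1),(1,1)} := by
        intro p hp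
        obtain ⟨hpl, hpr⟩ := hμ.1 p hp
        rcases p with ⟨i, j⟩
        fin_cases i <;> fin_cases j <;> simp_all
      calc ∑ p ∈ μ, A p.1 p.2 ≤ ∑ p ∈ ({(0,1),(1,1)} : Finset (Fin 2 × Fin 2)), A p.1 p.2 := by
            apply Finset.sum_le_sum_of_subset_of_nonneg hsub
            intro p _ _
            rcases p with ⟨i, j⟩
            fin_cases i <;> fin_cases j <;> simp [hA00, hA01, hA10, hA11] <;> linarith
        _ = b := by norm_num [hA01, hA11]
  · apply assignGame_eq'
    · refine ⟨{(1,0)}, ⟨?_, ?_, ?_⟩, by simp [hA10]⟩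
      · intro p hp; simp at hp; subst hp; exact ⟨h3.1, h3.2⟩
      · intro p hp q hq _; simp at hp hq; rw [hp, hq]
      · intro p hp q hq _; simp at hp hq; rw [hp, hq]
    · intro μ hμ
      have hsub : μ ⊆ {(1,0),(1,1)} := by
        intro p hp
        obtain ⟨hpl, hpr⟩ := hμ.1 p hp
        rcases p with ⟨i, j⟩
        fin_cases i <;> fin_cases j <;> simp_all
      calc ∑ p ∈ μ, A p.1 p.2 ≤ ∑ p ∈ ({(1,0),(1,1)} : Finset (Fin 2 × Fin 2)), A p.1 p.2 := by
            apply Finset.sum_le_sum_of_subset_of_nonneg hsub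
            intro p _ _
            rcases p with ⟨i, j⟩
            fin_cases i <;> fin_cases j <;> simp [hA00, hA01, hA10, hA11] <;> linarith
        _ = c := by norm_num [hA10, hA11]
  · apply assignGame_eq'
    · exact ⟨∅, isMatching_empty' S, by simp⟩
    · intro μ hμ
      have hsub : μ ⊆ {(1,1)} := by
        intro p hp
        obtain ⟨hpl, hpr⟩ := hμ.1 p hp
        rcases p with ⟨i, j⟩
        fin_cases i <;> fin_cases j <;> simp_all
      calc ∑ p ∈ μ, A p.1 p.2 ≤ ∑ p ∈ ({(1,1)} : Finset (Fin 2 × Fin 2)), A p.1 p.2 := by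
            apply Finset.sum_le_sum_of_subset_of_nonneg hsub
            intro p _ _
            rcases p with ⟨i, j⟩
            fin_cases i <;> fin_cases j <;> simp [hA00, hA01, hA10, hA11] <;> linarith
        _ = 0 := by norm_num [hA11]

end AuxAssign2x2

/-- In the 2×2 assignment game with matrix `![![a,b],![c,0]]`,
`a, b, c > 0` and `a ≥ b + c`, every core allocation is PMAS-extendable. -/
theorem assignGame_2x2_dominant_core_pmas_extendable (a b c : ℝ)
    (ha : 0 < a) (hb : 0 < b) (hc : 0 < c) (hdom : b + c ≤ a)
    (x : Fin 2 ⊕ Fin 2 → ℝ) (hx : InCore (assignGame ![![a, b], ![c, 0]]) x) :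
    PMASExtendable (assignGame ![![a, b], ![c, 0]]) x := by
  have hw := w_eval' a b c hb hc hdom
  obtain ⟨heff, hcore⟩ := hx
  -- total sum
  have htot : x (Sum.inl 0) + x (Sum.inl 1) + x (Sum.inr 0) + x (Sum.inr 1) = a := by
    have := heff
    rw [hw] at this
    simp [Fintype.sum_sum_type, Fin.sum_univ_two] at this
    linarith
  have h13 : a ≤ x (Sum.inl 0) + x (Sum.inr 0) := by
    have := hcore {Sum.inl 0, Sum.inr 0}
    rw [hw] at this
    simpa using this
  have h2 : (0:ℝ) ≤ x (Sum.inl 1) := by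
    have := hcore {Sum.inl 1}
    rw [hw] at this
    simpa using this
  have h4 : (0:ℝ) ≤ x (Sum.inr 1) := by
    have := hcore {Sum.inr 1}
    rw [hw] at this
    simpa using this
  have h14 : b ≤ x (Sum.inl 0) + x (Sum.inr 1) := by
    have := hcore {Sum.inl 0, Sum.inr 1}
    rw [hw] at this
    simpa using this
  have h23 : c ≤ x (Sum.inl 1) + x (Sum.inr 0) := by
    have := hcore {Sum.inl 1, Sum.inr 0}
    rw [hw] at this
    simpa using this
  set p := x (Sum.inl 0) with hp
  have hx2 : x (Sum.inl 1) = 0 := by linarith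
  have hx4 : x (Sum.inr 1) = 0 := by linarith
  have hx3 : x (Sum.inr 0) = a - p := by linarith
  have hbp : b ≤ p := by linarith
  have hcp : c ≤ a - p := by linarith
  -- the PMAS
  refine ⟨fun S i =>
    if i = Sum.inl 0 then (if Sum.inr 0 ∈ S then p else if Sum.inr 1 ∈ S then b else 0)
    else if i = Sum.inr 0 then (if Sum.inl 0 ∈ S then a - p else if Sum.inl 1 ∈ S then c else 0)
    else 0, ⟨?_, ?_⟩, ?_⟩
  · -- efficiency
    intro S hS
    rw [hw]
    have hzero : ∀ i ∈ S, i ∉ S ∩ ({Sum.inl 0, Sum.inr 0} : Finset (Fin 2 ⊕ Fin 2)) →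
        (if i = Sum.inl 0 then (if Sum.inr 0 ∈ S then p else if Sum.inr 1 ∈ S then b else 0)
         else if i = Sum.inr 0 then (if Sum.inl 0 ∈ S then a - p else if Sum.inl 1 ∈ S then c else 0)
         else 0) = 0 := by
      intro i hiS hi
      simp [Finset.mem_inter, hiS] at hi
      simp [hi.1, hi.2]
    rw [← Finset.sum_subset (Finset.inter_subset_left) hzero]
    by_cases h1 : Sum.inl 0 ∈ S <;> by_cases h3 : Sum.inr 0 ∈ S
    · have hint : S ∩ ({Sum.inl 0, Sum.inr 0} : Finset (Fin 2 ⊕ Fin 2)) =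
          {Sum.inl 0, Sum.inr 0} := by
        ext i
        simp only [Finset.mem_inter, Finset.mem_insert, Finset.mem_singleton]
        constructor
        · tauto
        · rintro (rfl | rfl) <;> simp [h1, h3]
      rw [hint]
      rw [Finset.sum_insert (by decide), Finset.sum_singleton]
      simp [h1, h3]
    · have hint : S ∩ ({Sum.inl 0, Sum.inr 0} : Finset (Fin 2 ⊕ Fin 2)) = {Sum.inl 0} := by
        ext i
        simp only [Finset.mem_inter, Finset.mem_insert, Finset.mem_singleton]
        constructor
        · rintro ⟨hiS, rfl | rfl⟩
          · rfl
          · exact absurd hiS h3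
        · rintro rfl; simp [h1]
      rw [hint, Finset.sum_singleton]
      by_cases h4' : Sum.inr 1 ∈ S <;> simp [h1, h3, h4']
    · have hint : S ∩ ({Sum.inl 0, Sum.inr 0} : Finset (Fin 2 ⊕ Fin 2)) = {Sum.inr 0} := by
        ext i
        simp only [Finset.mem_inter, Finset.mem_insert, Finset.mem_singleton]
        constructor
        · rintro ⟨hiS, rfl | rfl⟩
          · exact absurd hiS h1
          · rfl
        · rintro rfl; simp [h3]
      rw [hint, Finset.sum_singleton]
      by_cases h2' : Sum.inl 1 ∈ S <;> simp [h1, h3, h2']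
    · have hint : S ∩ ({Sum.inl 0, Sum.inr 0} : Finset (Fin 2 ⊕ Fin 2)) = ∅ := by
        ext i
        simp only [Finset.mem_inter, Finset.mem_insert, Finset.mem_singleton,
          Finset.notMem_empty, iff_false, not_and]
        rintro hiS (rfl | rfl)
        · exact h1 hiS
        · exact h3 hiS
      rw [hint, Finset.sum_empty]
      simp [h1, h3]
  · -- monotonicity
    intro S T hST i _
    have m1 : Sum.inl (0 : Fin 2) ∈ S → Sum.inl (0 : Fin 2) ∈ T := fun h => hST h
    have m2 : Sum.inl (1 : Fin 2) ∈ S → Sum.inl (1 : Fin 2) ∈ T := fun h => hST h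
    have m3 : Sum.inr (0 : Fin 2) ∈ S → Sum.inr (0 : Fin 2) ∈ T := fun h => hST h
    have m4 : Sum.inr (1 : Fin 2) ∈ S → Sum.inr (1 : Fin 2) ∈ T := fun h => hST h
    dsimp only
    split_ifs <;>
      first
        | linarith
        | exact absurd (m1 ‹_›) ‹_›
        | exact absurd (m2 ‹_›) ‹_›
        | exact absurd (m3 ‹_›) ‹_›
        | exact absurd (m4 ‹_›) ‹_›
  · -- extends x
    intro i
    rcases i with i | i <;> fin_cases i <;> simp [hx2, hx3, hx4, hp]
end

section
/- Let (I ∪ J, w) be the assignment game with row players I = {1,2} and column players J = {3,4} induced by the 2×2 matrix with entries a_{13} = a, a_{14} = b, a_{23} = c, a_{24} = 0, where a, b, c > 0 and a ≥ b + c. Then for every core allocation x of (I ∪ J, w) there is exactly one PMAS [x^S_i] with x^{I∪J} = x. -/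
open Finset

lemma assignGame_eq_of (A : Fin 2 → Fin 2 → ℝ) (S : Finset (Fin 2 ⊕ Fin 2)) (v : ℝ)
    (h1 : ∃ μ : Finset (Fin 2 × Fin 2), IsMatching S μ ∧ ∑ p ∈ μ, A p.1 p.2 = v)
    (h2 : ∀ μ : Finset (Fin 2 × Fin 2), IsMatching S μ → ∑ p ∈ μ, A p.1 p.2 ≤ v) :
    assignGame A S = v := by
  apply IsGreatest.csSup_eq
  obtain ⟨μ, hμ, hv⟩ := h1
  exact ⟨⟨μ, hμ, hv⟩, by rintro t ⟨ν, hν, rfl⟩; exact h2 ν hν⟩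

lemma matching_sum_le (A : Fin 2 → Fin 2 → ℝ) (S : Finset (Fin 2 ⊕ Fin 2))
    (μ : Finset (Fin 2 × Fin 2)) (h : IsMatching S μ) (u : Fin 2 ⊕ Fin 2 → ℝ)
    (hu0 : ∀ i, 0 ≤ u i)
    (hcov : ∀ i j : Fin 2, A i j ≤ u (Sum.inl i) + u (Sum.inr j)) :
    ∑ p ∈ μ, A p.1 p.2 ≤ ∑ i ∈ S, u i := by
  obtain ⟨hmem, hinj1, hinj2⟩ := h
  have step1 : ∑ p ∈ μ, A p.1 p.2 ≤ ∑ p ∈ μ, (u (Sum.inl p.1) + u (Sum.inr p.2)) :=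
    Finset.sum_le_sum fun p _ => hcov p.1 p.2
  have e1 : ∑ p ∈ μ, u (Sum.inl p.1)
      = ∑ i ∈ μ.image (fun p : Fin 2 × Fin 2 => (Sum.inl p.1 : Fin 2 ⊕ Fin 2)), u i := by
    rw [Finset.sum_image]
    intro p hp q hq hpq
    exact hinj1 p hp q hq (by injection hpq)
  have e2 : ∑ p ∈ μ, u (Sum.inr p.2)
      = ∑ i ∈ μ.image (fun p : Fin 2 × Fin 2 => (Sum.inr p.2 : Fin 2 ⊕ Fin 2)), u i := by
    rw [Finset.sum_image]
    intro p hp q hq hpq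
    exact hinj2 p hp q hq (by injection hpq)
  have hdisj : Disjoint (μ.image (fun p : Fin 2 × Fin 2 => (Sum.inl p.1 : Fin 2 ⊕ Fin 2)))
      (μ.image (fun p : Fin 2 × Fin 2 => (Sum.inr p.2 : Fin 2 ⊕ Fin 2))) := by
    rw [Finset.disjoint_left]
    rintro x hx1 hx2
    simp only [Finset.mem_image] at hx1 hx2
    obtain ⟨p, -, rfl⟩ := hx1
    obtain ⟨q, -, hq⟩ := hx2
    cases hq
  have hsub : (μ.image (fun p : Fin 2 × Fin 2 => (Sum.inl p.1 : Fin 2 ⊕ Fin 2)))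
      ∪ (μ.image (fun p : Fin 2 × Fin 2 => (Sum.inr p.2 : Fin 2 ⊕ Fin 2))) ⊆ S := by
    intro x hx
    rcases Finset.mem_union.1 hx with hx | hx <;>
      · obtain ⟨p, hp, rfl⟩ := Finset.mem_image.1 hx
        first | exact (hmem p hp).1 | exact (hmem p hp).2
  calc ∑ p ∈ μ, A p.1 p.2 ≤ ∑ p ∈ μ, (u (Sum.inl p.1) + u (Sum.inr p.2)) := step1
    _ = ∑ p ∈ μ, u (Sum.inl p.1) + ∑ p ∈ μ, u (Sum.inr p.2) := Finset.sum_add_distrib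
    _ = ∑ i ∈ (μ.image (fun p : Fin 2 × Fin 2 => (Sum.inl p.1 : Fin 2 ⊕ Fin 2)))
          ∪ (μ.image (fun p : Fin 2 × Fin 2 => (Sum.inr p.2 : Fin 2 ⊕ Fin 2))), u i := by
        rw [e1, e2, Finset.sum_union hdisj]
    _ ≤ ∑ i ∈ S, u i := Finset.sum_le_sum_of_subset_of_nonneg hsub (fun i _ _ => hu0 i)

lemma sum_decomp (S : Finset (Fin 2 ⊕ Fin 2)) (f : Fin 2 ⊕ Fin 2 → ℝ) :
    ∑ i ∈ S, f i =
      ((if Sum.inl 0 ∈ S then f (Sum.inl 0) else 0) + (if Sum.inl 1 ∈ S then f (Sum.inl 1) else 0)) +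
      ((if Sum.inr 0 ∈ S then f (Sum.inr 0) else 0) + (if Sum.inr 1 ∈ S then f (Sum.inr 1) else 0)) := by
  rw [← Finset.univ_inter S, ← Finset.sum_ite_mem, Fintype.sum_sum_type,
    Fin.sum_univ_two, Fin.sum_univ_two]
  simp

lemma wval (a b c : ℝ) (ha : 0 < a) (hb : 0 < b) (hc : 0 < c) (hdom : b + c ≤ a)
    (S : Finset (Fin 2 ⊕ Fin 2)) :
    assignGame ![![a, b], ![c, 0]] S =
      if Sum.inl 0 ∈ S ∧ Sum.inr 0 ∈ S then a
      else if Sum.inl 0 ∈ S ∧ Sum.inr 1 ∈ S then b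
      else if Sum.inl 1 ∈ S ∧ Sum.inr 0 ∈ S then c else 0 := by
  set A : Fin 2 → Fin 2 → ℝ := ![![a, b], ![c, 0]] with hA
  have hub : ∀ i, 0 ≤ (fun i : Fin 2 ⊕ Fin 2 => if i = Sum.inl 0 then b else if i = Sum.inr 0 then a - b else 0) i := by
    intro i; dsimp only; split_ifs <;> linarith
  have hcb : ∀ i j : Fin 2, A i j ≤ (fun i : Fin 2 ⊕ Fin 2 => if i = Sum.inl 0 then b else if i = Sum.inr 0 then a - b else 0) (Sum.inl i) + (fun i : Fin 2 ⊕ Fin 2 => if i = Sum.inl 0 then b else if i = Sum.inr 0 then a - b else 0) (Sum.inr j) := by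
    intro i j; fin_cases i <;> fin_cases j <;> simp [hA] <;> linarith
  have huc : ∀ i, 0 ≤ (fun i : Fin 2 ⊕ Fin 2 => if i = Sum.inl 0 then a - c else if i = Sum.inr 0 then c else 0) i := by
    intro i; dsimp only; split_ifs <;> linarith
  have hcc : ∀ i j : Fin 2, A i j ≤ (fun i : Fin 2 ⊕ Fin 2 => if i = Sum.inl 0 then a - c else if i = Sum.inr 0 then c else 0) (Sum.inl i) + (fun i : Fin 2 ⊕ Fin 2 => if i = Sum.inl 0 then a - c else if i = Sum.inr 0 then c else 0) (Sum.inr j) := by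
    intro i j; fin_cases i <;> fin_cases j <;> simp [hA] <;> linarith
  by_cases h13 : Sum.inl 0 ∈ S ∧ Sum.inr 0 ∈ S
  · rw [if_pos h13]
    apply assignGame_eq_of
    · exact ⟨{((0 : Fin 2), (0 : Fin 2))}, by simp [IsMatching, h13.1, h13.2], by simp [hA]⟩
    · intro μ hμ
      refine (matching_sum_le A S μ hμ _ hub hcb).trans ?_
      refine (Finset.sum_le_sum_of_subset_of_nonneg (Finset.subset_univ S)
        (fun i _ _ => hub i)).trans ?_
      rw [Fintype.sum_sum_type, Fin.sum_univ_two, Fin.sum_univ_two]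
      simp
  · rw [if_neg h13]
    by_cases h14 : Sum.inl 0 ∈ S ∧ Sum.inr 1 ∈ S
    · rw [if_pos h14]
      have h3n : Sum.inr 0 ∉ S := fun h => h13 ⟨h14.1, h⟩
      apply assignGame_eq_of
      · exact ⟨{((0 : Fin 2), (1 : Fin 2))}, by simp [IsMatching, h14.1, h14.2], by simp [hA]⟩
      · intro μ hμ
        refine (matching_sum_le A S μ hμ _ hub hcb).trans ?_
        have hsub : S ⊆ ({Sum.inl 0, Sum.inl 1, Sum.inr 1} : Finset (Fin 2 ⊕ Fin 2)) := by
          intro x hx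
          fin_cases x <;> first | exact absurd hx h3n | decide
        refine (Finset.sum_le_sum_of_subset_of_nonneg hsub (fun i _ _ => hub i)).trans ?_
        rw [Finset.sum_insert (by decide), Finset.sum_insert (by decide), Finset.sum_singleton]
        simp
    · rw [if_neg h14]
      by_cases h23 : Sum.inl 1 ∈ S ∧ Sum.inr 0 ∈ S
      · rw [if_pos h23]
        have h1n : Sum.inl 0 ∉ S := fun h => h13 ⟨h, h23.2⟩
        apply assignGame_eq_of
        · exact ⟨{((1 : Fin 2), (0 : Fin 2))}, by simp [IsMatching, h23.1, h23.2], by simp [hA]⟩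
        · intro μ hμ
          refine (matching_sum_le A S μ hμ _ huc hcc).trans ?_
          have hsub : S ⊆ ({Sum.inl 1, Sum.inr 0, Sum.inr 1} : Finset (Fin 2 ⊕ Fin 2)) := by
            intro x hx
            fin_cases x <;> first | exact absurd hx h1n | decide
          refine (Finset.sum_le_sum_of_subset_of_nonneg hsub (fun i _ _ => huc i)).trans ?_
          rw [Finset.sum_insert (by decide), Finset.sum_insert (by decide), Finset.sum_singleton]
          simp
      · rw [if_neg h23]
        apply assignGame_eq_of
        · exact ⟨∅, by simp [IsMatching], by simp⟩
        · intro μ hμ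
          obtain ⟨hmem, -, -⟩ := hμ
          refine Finset.sum_nonpos ?_
          intro p hp
          obtain ⟨hp1, hp2⟩ := hmem p hp
          rcases p with ⟨i, j⟩
          fin_cases i <;> fin_cases j
          · exact absurd ⟨hp1, hp2⟩ h13
          · exact absurd ⟨hp1, hp2⟩ h14
          · exact absurd ⟨hp1, hp2⟩ h23
          · simp [hA]

noncomputable def pmasY (b c : ℝ) (x : Fin 2 ⊕ Fin 2 → ℝ)
    (S : Finset (Fin 2 ⊕ Fin 2)) (i : Fin 2 ⊕ Fin 2) : ℝ :=
  if i = Sum.inl 0 then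
    (if Sum.inr 0 ∈ S then x (Sum.inl 0) else if Sum.inr 1 ∈ S then b else 0)
  else if i = Sum.inr 0 then
    (if Sum.inl 0 ∈ S then x (Sum.inr 0) else if Sum.inl 1 ∈ S then c else 0)
  else 0

/-- In the 2×2 assignment game with matrix `![![a,b],![c,0]]`,
`a, b, c > 0` and `a ≥ b + c`, every core allocation extends to exactly one
PMAS (uniqueness of the scheme on its relevant entries, i.e. on pairs `(S, i)`
with `i ∈ S`). -/
theorem assignGame_2x2_dominant_unique_pmas_extension (a b c : ℝ)
    (ha : 0 < a) (hb : 0 < b) (hc : 0 < c) (hdom : b + c ≤ a)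
    (x : Fin 2 ⊕ Fin 2 → ℝ) (hx : InCore (assignGame ![![a, b], ![c, 0]]) x) :
    ∃ y, IsPMAS (assignGame ![![a, b], ![c, 0]]) y ∧ (∀ i, y Finset.univ i = x i) ∧
      ∀ z, IsPMAS (assignGame ![![a, b], ![c, 0]]) z → (∀ i, z Finset.univ i = x i) →
        ∀ S : Finset (Fin 2 ⊕ Fin 2), ∀ i ∈ S, z S i = y S i := by
  have hw := wval a b c ha hb hc hdom
  obtain ⟨hxeff, hxcore⟩ := hx
  -- core facts
  have hcases : ∀ j : Fin 2 ⊕ Fin 2,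
      j = Sum.inl 0 ∨ j = Sum.inl 1 ∨ j = Sum.inr 0 ∨ j = Sum.inr 1 := by decide
  have hsum : x (Sum.inl 0) + x (Sum.inl 1) + (x (Sum.inr 0) + x (Sum.inr 1)) = a := by
    have h0 := hxeff
    rw [hw, Fintype.sum_sum_type, Fin.sum_univ_two, Fin.sum_univ_two] at h0
    simpa using h0
  have h13 : a ≤ x (Sum.inl 0) + x (Sum.inr 0) := by
    have := hxcore {Sum.inl 0, Sum.inr 0}
    rw [hw, Finset.sum_pair (by decide)] at this
    simpa using this
  have h14 : b ≤ x (Sum.inl 0) + x (Sum.inr 1) := by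
    have := hxcore {Sum.inl 0, Sum.inr 1}
    rw [hw, Finset.sum_pair (by decide)] at this
    simpa using this
  have h23 : c ≤ x (Sum.inl 1) + x (Sum.inr 0) := by
    have := hxcore {Sum.inl 1, Sum.inr 0}
    rw [hw, Finset.sum_pair (by decide)] at this
    simpa using this
  have h2 : 0 ≤ x (Sum.inl 1) := by
    have := hxcore {Sum.inl 1}
    rw [hw, Finset.sum_singleton] at this
    simpa using this
  have h4 : 0 ≤ x (Sum.inr 1) := by
    have := hxcore {Sum.inr 1}
    rw [hw, Finset.sum_singleton] at this
    simpa using this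
  have hx2 : x (Sum.inl 1) = 0 := by linarith
  have hx4 : x (Sum.inr 1) = 0 := by linarith
  have hab : x (Sum.inl 0) + x (Sum.inr 0) = a := by linarith
  have hbα : b ≤ x (Sum.inl 0) := by linarith
  have hcβ : c ≤ x (Sum.inr 0) := by linarith
  refine ⟨pmasY b c x, ⟨?_, ?_⟩, ?_, ?_⟩
  · -- efficiency
    intro S _
    rw [sum_decomp, hw]
    simp only [pmasY, if_true, reduceCtorEq, if_false, reduceIte]
    by_cases m1 : Sum.inl 0 ∈ S <;> by_cases m2 : Sum.inl 1 ∈ S <;>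
      by_cases m3 : Sum.inr 0 ∈ S <;> by_cases m4 : Sum.inr 1 ∈ S <;>
      simp [m1, m2, m3, m4] <;> linarith
  · -- monotonicity
    intro S T hST i _
    have m3 : Sum.inr 0 ∈ S → Sum.inr 0 ∈ T := fun h => hST h
    have m4 : Sum.inr 1 ∈ S → Sum.inr 1 ∈ T := fun h => hST h
    have m1 : Sum.inl 0 ∈ S → Sum.inl 0 ∈ T := fun h => hST h
    have m2 : Sum.inl 1 ∈ S → Sum.inl 1 ∈ T := fun h => hST h
    unfold pmasY
    split_ifs <;> first | linarith | (exfalso; tauto)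
  · -- top coalition
    intro i
    rcases hcases i with rfl | rfl | rfl | rfl <;> simp [pmasY, hx2, hx4]
  · -- uniqueness
    intro z hz hztop S i hi
    obtain ⟨zeff, zmono⟩ := hz
    have zsingle : ∀ j : Fin 2 ⊕ Fin 2, z {j} j = 0 := by
      intro j
      have h := zeff {j} ⟨j, Finset.mem_singleton_self j⟩
      rw [Finset.sum_singleton, hw] at h
      rcases hcases j with rfl | rfl | rfl | rfl <;> simpa using h
    have znn : ∀ (T : Finset (Fin 2 ⊕ Fin 2)) (j : Fin 2 ⊕ Fin 2), j ∈ T → 0 ≤ z T j := by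
      intro T j hj
      have := zmono {j} T (Finset.singleton_subset_iff.2 hj) j (Finset.mem_singleton_self j)
      rw [zsingle] at this
      exact this
    have zub : ∀ (T : Finset (Fin 2 ⊕ Fin 2)) (j : Fin 2 ⊕ Fin 2), j ∈ T → z T j ≤ x j := by
      intro T j hj
      have := zmono T Finset.univ (Finset.subset_univ T) j hj
      rwa [hztop] at this
    have z2 : ∀ T : Finset (Fin 2 ⊕ Fin 2), Sum.inl 1 ∈ T → z T (Sum.inl 1) = 0 := by
      intro T hT
      have := zub T _ hT
      rw [hx2] at this
      exact le_antisymm this (znn T _ hT)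
    have z4 : ∀ T : Finset (Fin 2 ⊕ Fin 2), Sum.inr 1 ∈ T → z T (Sum.inr 1) = 0 := by
      intro T hT
      have := zub T _ hT
      rw [hx4] at this
      exact le_antisymm this (znn T _ hT)
    have hzsum := zeff S ⟨i, hi⟩
    rw [sum_decomp, hw] at hzsum
    -- reduce everything to case analysis
    rcases hcases i with rfl | rfl | rfl | rfl
    · -- i = Sum.inl 0
      simp only [pmasY, reduceIte]
      by_cases m3 : Sum.inr 0 ∈ S
      · rw [if_pos m3]
        have hub1 := zub S _ hi
        have hub3 := zub S _ m3
        by_cases m2 : Sum.inl 1 ∈ S <;> by_cases m4 : Sum.inr 1 ∈ S <;>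
          simp [hi, m2, m3, m4, z2 S, z4 S] at hzsum <;> linarith
      · rw [if_neg m3]
        by_cases m4 : Sum.inr 1 ∈ S
        · rw [if_pos m4]
          by_cases m2 : Sum.inl 1 ∈ S <;>
            simp [hi, m2, m3, m4, z2 S, z4 S] at hzsum <;> linarith
        · rw [if_neg m4]
          by_cases m2 : Sum.inl 1 ∈ S <;>
            simp [hi, m2, m3, m4, z2 S, z4 S] at hzsum <;> linarith
    · -- i = Sum.inl 1
      simp only [pmasY, reduceCtorEq, reduceIte]
      exact z2 S hi
    · -- i = Sum.inr 0
      simp only [pmasY, reduceCtorEq, reduceIte]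
      by_cases m1 : Sum.inl 0 ∈ S
      · rw [if_pos m1]
        have hub1 := zub S _ m1
        have hub3 := zub S _ hi
        by_cases m2 : Sum.inl 1 ∈ S <;> by_cases m4 : Sum.inr 1 ∈ S <;>
          simp [hi, m1, m2, m4, z2 S, z4 S] at hzsum <;> linarith
      · rw [if_neg m1]
        by_cases m2 : Sum.inl 1 ∈ S
        · rw [if_pos m2]
          by_cases m4 : Sum.inr 1 ∈ S <;>
            simp [hi, m1, m2, m4, z2 S, z4 S] at hzsum <;> linarith
        · rw [if_neg m2]
          by_cases m4 : Sum.inr 1 ∈ S <;>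
            simp [hi, m1, m2, m4, z2 S, z4 S] at hzsum <;> linarith
    · -- i = Sum.inr 1
      simp only [pmasY, reduceCtorEq, reduceIte]
      exact z4 S hi
end
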